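/- Let A be a real symmetric n×n matrix and D a real invertible n×n matrix whose symmetric part ½(D + Dᵀ) is positive definite. Then D⁻¹A has no nonzero purely imaginary eigenvalue, i.e., iτ ∉ spec(D⁻¹A) for all τ ∈ ℝ with τ ≠ 0. -/

import Mathlib

open Matrix Complex

/-- Real part of `vᴴ D v` as two real quadratic forms. -/
lemma re_star_dot (n : ℕ) (D : Matrix (Fin n) (Fin n) ℝ) (v : Fin n → ℂ) :
    (star v ⬝ᵥ ((D.map (Complex.ofReal)) *ᵥ v)).re
      = (fun i => (v i).re) ⬝ᵥ (D *ᵥ fun i => (v i).re)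
        + (fun i => (v i).im) ⬝ᵥ (D *ᵥ fun i => (v i).im) := by
  simp only [dotProduct, mulVec, Matrix.map_apply, Pi.star_apply, Finset.mul_sum,
    Complex.re_sum]
  rw [← Finset.sum_add_distrib]
  refine Finset.sum_congr rfl fun i _ => ?_
  rw [← Finset.sum_add_distrib]
  refine Finset.sum_congr rfl fun j _ => ?_
  simp [Complex.mul_re, Complex.mul_im, RCLike.star_def]

lemma quad_eq (n : ℕ) (D : Matrix (Fin n) (Fin n) ℝ) (x : Fin n → ℝ) :
    x ⬝ᵥ ((((1 : ℝ) / 2) • (D + Dᵀ)) *ᵥ x) = x ⬝ᵥ (D *ᵥ x) := by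
  rw [Matrix.smul_mulVec, Matrix.add_mulVec, dotProduct_smul, dotProduct_add]
  have : x ⬝ᵥ (Dᵀ *ᵥ x) = x ⬝ᵥ (D *ᵥ x) := by
    rw [Matrix.dotProduct_mulVec, Matrix.vecMul_transpose, dotProduct_comm]
  rw [this]
  simp [smul_eq_mul]
  ring

/-- If `A` is real symmetric and the symmetric part `½(D + Dᵀ)` of the invertible real
matrix `D` is positive definite, then `D⁻¹A` has no nonzero purely imaginary eigenvalue:
there is no `v ≠ 0` in `ℂⁿ` and `τ ∈ ℝ`, `τ ≠ 0`, with `(D⁻¹A) v = iτ v`. -/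
theorem stmt_4 (n : ℕ) (A D : Matrix (Fin n) (Fin n) ℝ)
    (hA : Aᵀ = A) (hD : IsUnit D)
    (hpos : (((1 : ℝ) / 2) • (D + Dᵀ)).PosDef)
    (v : Fin n → ℂ) (hv : v ≠ 0) (τ : ℝ) (hτ : τ ≠ 0) :
    ¬ ((D⁻¹ * A).map (Complex.ofReal)).mulVec v = ((τ : ℂ) * Complex.I) • v := by
  intro h
  set c : ℂ := (τ : ℂ) * Complex.I with hc_def
  have hc : c ≠ 0 := mul_ne_zero (by exact_mod_cast hτ) Complex.I_ne_zero
  have hmap : ∀ M N : Matrix (Fin n) (Fin n) ℝ,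
      (M * N).map (Complex.ofReal) = M.map Complex.ofReal * N.map Complex.ofReal := by
    intro M N
    exact Matrix.map_mul (f := Complex.ofRealHom)
  have hDinv : D.map Complex.ofReal * D⁻¹.map Complex.ofReal = 1 := by
    rw [← hmap, Matrix.mul_nonsing_inv _ (isUnit_iff_isUnit_det D |>.mp hD)]
    simp
  -- A v = c • D v
  have key : (A.map Complex.ofReal) *ᵥ v = c • ((D.map Complex.ofReal) *ᵥ v) := by
    have h1 := congrArg (fun w => (D.map Complex.ofReal) *ᵥ w) h
    simp only [hmap] at h1
    rw [Matrix.mulVec_smul, Matrix.mulVec_mulVec, ← Matrix.mul_assoc, hDinv,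
      Matrix.one_mul] at h1
    exact h1
  set d : ℂ := star v ⬝ᵥ ((D.map Complex.ofReal) *ᵥ v) with hd_def
  set s : ℂ := star v ⬝ᵥ ((A.map Complex.ofReal) *ᵥ v) with hs_def
  have hs : s = c * d := by
    rw [hs_def, key, dotProduct_smul, smul_eq_mul, hd_def]
  -- s is real since A is hermitian
  have hsreal : (starRingEnd ℂ) s = s := by
    rw [hs_def]
    simp only [dotProduct, mulVec, Finset.mul_sum, map_sum, Pi.star_apply,
      Matrix.map_apply, RCLike.star_def]
    rw [Finset.sum_comm]
    refine Finset.sum_congr rfl fun i _ => Finset.sum_congr rfl fun j _ => ?_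
    have hAsym : A i j = A j i := by
      conv_lhs => rw [← hA]
      rfl
    simp only [_root_.map_mul, Complex.conj_conj, Complex.conj_ofReal]
    rw [hAsym]
    ring
  -- hence c * (d + conj d) = 0, so d.re = 0
  have hconj : (starRingEnd ℂ) s = (starRingEnd ℂ) c * (starRingEnd ℂ) d :=
    (congrArg (starRingEnd ℂ) hs).trans (_root_.map_mul (starRingEnd ℂ) c d)
  have hcconj : (starRingEnd ℂ) c = -c := by
    simp [hc_def, Complex.conj_I, Complex.conj_ofReal]
  have hdre : d.re = 0 := by
    have heq : c * d = -c * (starRingEnd ℂ) d := by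
      rw [← hs, ← hsreal, hconj, hcconj]
    have h3 : c * (d + (starRingEnd ℂ) d) = 0 := by
      rw [mul_add, heq]; ring
    have h4 : d + (starRingEnd ℂ) d = 0 := by
      rcases mul_eq_zero.mp h3 with h | h
      · exact absurd h hc
      · exact h
    have h5 := congrArg Complex.re h4
    simp [Complex.add_re, Complex.conj_re] at h5
    linarith
  -- but d.re > 0
  have hre := re_star_dot n D v
  set x : Fin n → ℝ := fun i => (v i).re with hx_def
  set y : Fin n → ℝ := fun i => (v i).im with hy_def
  have hxy : x ≠ 0 ∨ y ≠ 0 := by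
    by_contra hcon
    push_neg at hcon
    apply hv
    funext i
    have h1 := congrFun hcon.1 i
    have h2 := congrFun hcon.2 i
    simp [hx_def, hy_def] at h1 h2
    exact Complex.ext h1 h2
  have hq : ∀ z : Fin n → ℝ, 0 ≤ z ⬝ᵥ (D *ᵥ z) := by
    intro z
    rw [← quad_eq]
    simpa using hpos.posSemidef.dotProduct_mulVec_nonneg z
  have hq' : ∀ z : Fin n → ℝ, z ≠ 0 → 0 < z ⬝ᵥ (D *ᵥ z) := by
    intro z hz
    rw [← quad_eq]
    simpa using hpos.dotProduct_mulVec_pos hz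
  have hpos' : 0 < d.re := by
    rw [hd_def, hre]
    rcases hxy with hx | hy
    · have := hq' x hx; have := hq y; linarith
    · have := hq x; have := hq' y hy; linarith
  rw [hdre] at hpos'
  exact lt_irrefl _ hpos'
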